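/- The projected Hessian N^T H N ∈ ℝ^{T·n_x × T·n_x} is symmetric positive definite (its full rank is guaranteed by the terms B^T Q B coming from the positive definite state-cost blocks, even though the control-cost blocks U are only assumed positive semidefinite). -/

import Mathlib

/-!
`H` is block diagonal with positive semidefinite blocks, so `xᵀ Nᵀ H N x` is a sum of
nonnegative block terms. The `x(k+1)` block of `N x` is `B x_k`, so if `x_k ≠ 0` then the
`x(k+1)` term, `(B x_k)ᵀ Q (B x_k)` (or with `Q_f`), is strictly positive since `B` is
invertible.
-/

open Matrix

/-- The sparse null-space basis `N ∈ ℝ^{2T·n_x × T·n_x}`, viewed block-wise.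
Variables are ordered as `(u(0), x(1), u(1), x(2), …, u(T−1), x(T))`: row block
`(s, 0)` corresponds to `u(s)` and `(s, 1)` corresponds to `x(s+1)`.
Column block `k` has `I` in the `u(k)` row block `(k, 0)`, `B` in the `x(k+1)` row
block `(k, 1)`, and (for `k ≤ T−2`) `C = −B⁻¹AB` in the `u(k+1)` row block
`(k+1, 0)`; all other blocks are zero. -/
noncomputable def NMat (T nx : ℕ) (A B : Matrix (Fin nx) (Fin nx) ℝ) :
    Matrix ((Fin T × Fin 2) × Fin nx) (Fin T × Fin nx) ℝ :=
  fun p q =>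
    (if p.1.1 = q.1 ∧ p.1.2 = 0 then (1 : Matrix (Fin nx) (Fin nx) ℝ) p.2 q.2 else 0) +
    (if p.1.1 = q.1 ∧ p.1.2 = 1 then B p.2 q.2 else 0) +
    (if ((p.1.1 : ℕ) = (q.1 : ℕ) + 1) ∧ p.1.2 = 0 then (-(B⁻¹ * A * B)) p.2 q.2 else 0)

/-- The block-diagonal Hessian `H ∈ ℝ^{2T·n_x × 2T·n_x}` with `U` on every `u(k)`
diagonal block `(k, 0)`, `Q` on every `x(k)` diagonal block for `k = 1,…,T−1`
(row blocks `(k, 1)` with `k ≤ T−2`), and `Q_f` on the `x(T)` diagonal block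
`(T−1, 1)`; all off-diagonal blocks are zero. -/
noncomputable def HMat (T nx : ℕ) (U Q Qf : Matrix (Fin nx) (Fin nx) ℝ) :
    Matrix ((Fin T × Fin 2) × Fin nx) ((Fin T × Fin 2) × Fin nx) ℝ :=
  fun p q =>
    if p.1 = q.1 then
      (if p.1.2 = 0 then U p.2 q.2
       else if (p.1.1 : ℕ) = T - 1 then Qf p.2 q.2 else Q p.2 q.2)
    else 0

namespace Matrix

section BlockDiagonal

variable {m o R : Type*} [Fintype m] [Fintype o] [DecidableEq o]

theorem dotProduct_blockDiagonal_mulVec [NonUnitalNonAssocSemiring R]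
    (M : o → Matrix m m R) (x y : m × o → R) :
    x ⬝ᵥ (blockDiagonal M *ᵥ y) = ∑ k, (fun i ↦ x (i, k)) ⬝ᵥ (M k *ᵥ fun j ↦ y (j, k)) := by
  simp only [dotProduct, mulVec, blockDiagonal_apply, Fintype.sum_prod_type, Finset.mul_sum]
  rw [Finset.sum_comm]
  refine Finset.sum_congr rfl fun k _ ↦ Finset.sum_congr rfl fun i _ ↦ ?_
  rw [Finset.sum_comm, Finset.sum_eq_single k] <;> simp +contextual [eq_comm]

variable [Ring R] [PartialOrder R] [IsOrderedAddMonoid R] [StarRing R]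

theorem PosSemidef.blockDiagonal {M : o → Matrix m m R} (hM : ∀ k, (M k).PosSemidef) :
    (blockDiagonal M).PosSemidef :=
  .of_dotProduct_mulVec_nonneg (isHermitian_blockDiagonal_iff.mpr fun k ↦ (hM k).1) fun x ↦ by
    rw [dotProduct_blockDiagonal_mulVec]
    exact Finset.sum_nonneg fun k _ ↦ (hM k).dotProduct_mulVec_nonneg _

theorem blockDiagonal_dotProduct_mulVec_pos {M : o → Matrix m m R}
    (hM : ∀ k, (M k).PosSemidef) {k : o} (hk : (M k).PosDef) {x : m × o → R}
    (hx : (fun i ↦ x (i, k)) ≠ 0) : 0 < star x ⬝ᵥ (blockDiagonal M *ᵥ x) := by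
  rw [dotProduct_blockDiagonal_mulVec]
  exact Finset.sum_pos' (fun l _ ↦ (hM l).dotProduct_mulVec_nonneg _)
    ⟨k, Finset.mem_univ _, hk.dotProduct_mulVec_pos hx⟩

end BlockDiagonal

end Matrix

section ProjectedHessian

variable {T nx : ℕ}

noncomputable def hessianBlock (T : ℕ) (U Q Qf : Matrix (Fin nx) (Fin nx) ℝ) :
    Fin T × Fin 2 → Matrix (Fin nx) (Fin nx) ℝ :=
  fun c ↦ if c.2 = 0 then U else if (c.1 : ℕ) = T - 1 then Qf else Q

theorem HMat_eq_submatrix_blockDiagonal (U Q Qf : Matrix (Fin nx) (Fin nx) ℝ) :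
    HMat T nx U Q Qf = (blockDiagonal (hessianBlock T U Q Qf)).submatrix
      (Equiv.prodComm _ _) (Equiv.prodComm _ _) := by
  ext p q
  simp only [HMat, hessianBlock, submatrix_apply, blockDiagonal_apply, Equiv.prodComm_apply,
    Prod.snd_swap, Prod.fst_swap]
  split_ifs <;> simp_all

theorem hessianBlock_posSemidef {U Q Qf : Matrix (Fin nx) (Fin nx) ℝ} (hU : U.PosSemidef)
    (hQ : Q.PosSemidef) (hQf : Qf.PosSemidef) (c : Fin T × Fin 2) :
    (hessianBlock T U Q Qf c).PosSemidef := by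
  unfold hessianBlock
  split_ifs
  exacts [hU, hQf, hQ]

theorem hessianBlock_state_posDef (U : Matrix (Fin nx) (Fin nx) ℝ)
    {Q Qf : Matrix (Fin nx) (Fin nx) ℝ} (hQ : Q.PosDef) (hQf : Qf.PosDef) (k : Fin T) :
    (hessianBlock T U Q Qf (k, 1)).PosDef := by
  rw [hessianBlock, if_neg Fin.zero_lt_one.ne']
  split_ifs
  exacts [hQf, hQ]

theorem NMat_mulVec_apply_state (A B : Matrix (Fin nx) (Fin nx) ℝ) (x : Fin T × Fin nx → ℝ)
    (k : Fin T) (i : Fin nx) :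
    (NMat T nx A B *ᵥ x) ((k, 1), i) = (B *ᵥ fun j ↦ x (k, j)) i := by
  simp only [mulVec, dotProduct, NMat, Fintype.sum_prod_type]
  rw [Finset.sum_eq_single k] <;> simp +contextual [eq_comm]

end ProjectedHessian

theorem NHN_posDef_general (T nx : ℕ)
    (A B : Matrix (Fin nx) (Fin nx) ℝ) (hB : IsUnit B)
    (U Q Qf : Matrix (Fin nx) (Fin nx) ℝ)
    (hU : U.PosSemidef) (hQ : Q.PosDef) (hQf : Qf.PosDef) :
    ((NMat T nx A B)ᵀ * HMat T nx U Q Qf * NMat T nx A B).PosDef := by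
  have hblocks := hessianBlock_posSemidef (T := T) hU hQ.posSemidef hQf.posSemidef
  have hH : (HMat T nx U Q Qf).PosSemidef := by
    rw [HMat_eq_submatrix_blockDiagonal]
    exact (PosSemidef.blockDiagonal hblocks).submatrix _
  rw [← conjTranspose_eq_transpose_of_trivial]
  refine .of_dotProduct_mulVec_pos (hH.conjTranspose_mul_mul_same _).1 fun x hx ↦ ?_
  obtain ⟨k, hk⟩ : ∃ k, (fun j ↦ x (k, j)) ≠ 0 := by
    by_contra! h
    exact hx (funext fun q ↦ congrFun (h q.1) q.2)
  have hstate : (fun j ↦ (NMat T nx A B *ᵥ x) ((k, 1), j)) ≠ 0 := by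
    simp only [NMat_mulVec_apply_state]
    exact (mulVec_injective_of_isUnit hB).ne hk |>.trans_eq (mulVec_zero B)
  rw [← mulVec_mulVec, ← mulVec_mulVec, dotProduct_mulVec, ← star_mulVec,
    HMat_eq_submatrix_blockDiagonal, submatrix_mulVec_equiv,
    ← comp_equiv_symm_dotProduct]
  exact blockDiagonal_dotProduct_mulVec_pos hblocks (hessianBlock_state_posDef U hQ hQf k)
    hstate

/-- The projected Hessian `Nᵀ H N ∈ ℝ^{T·n_x × T·n_x}` is symmetric
positive definite (its full rank is guaranteed by the terms `Bᵀ Q B` coming from the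
positive definite state-cost blocks, even though the control-cost block `U` is only
assumed positive semidefinite). -/
theorem NHN_posDef (T nx : ℕ) (hT : 1 ≤ T) (hnx : 1 ≤ nx)
    (A B : Matrix (Fin nx) (Fin nx) ℝ) (hB : IsUnit B)
    (U Q Qf : Matrix (Fin nx) (Fin nx) ℝ)
    (hU : U.PosSemidef) (hQ : Q.PosDef) (hQf : Qf.PosDef) :
    ((NMat T nx A B)ᵀ * HMat T nx U Q Qf * NMat T nx A B).PosDef :=
  NHN_posDef_general T nx A B hB U Q Qf hU hQ hQf
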